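/- Let Z be a finite alphabet and P a probability distribution on Z. For each n, let μ_n be a probability distribution on Z^n, and let P^{⊗n} denote the n-fold i.i.d. product of P on Z^n. If lim_{n→∞} 𝕍(μ_n, P^{⊗n}) = 0, then for every ε > 0, lim_{n→∞} μ_n{ z^{1:n} ∈ Z^n : 𝕍(T_{z^{1:n}}, P) > ε } = 0. -/

import Mathlib

open Finset Filter

/-! Under `P^{⊗n}` each frequency `T(a)` is an average of `n` independent indicators, with
variance `P a (1 - P a) / n`. By Cauchy–Schwarz over the alphabet the second moment of
`∑ₐ |T(a) - P a|` is then at most `|Z| / n`, so Chebyshev's inequality bounds the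
`P^{⊗n}`-probability of the atypical set by `|Z| / (n ε²)`. Replacing `P^{⊗n}` by `μ_n`
changes the probability of any set by at most `𝕍(μ_n, P^{⊗n})`. -/

section ProductWeights

variable {Z : Type*} [Fintype Z] {n : ℕ}

lemma sum_prod_mul_prod_eq_prod_sum (P : Z → ℝ) (g : Fin n → Z → ℝ) :
    ∑ z : Fin n → Z, (∏ k, P (z k)) * ∏ k, g k (z k) = ∏ k, ∑ x, P x * g k x := by
  simp_rw [← prod_mul_distrib]
  exact (Fintype.prod_sum fun k x => P x * g k x).symm

variable {P : Z → ℝ}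

lemma sum_prod_mul_apply (hP1 : ∑ x, P x = 1) (i : Fin n) (f : Z → ℝ) :
    ∑ z : Fin n → Z, (∏ k, P (z k)) * f (z i) = ∑ x, P x * f x := by
  simpa [mul_ite, sum_ite_irrel, hP1] using
    sum_prod_mul_prod_eq_prod_sum P fun k x => if k = i then f x else 1

lemma sum_prod_mul_apply_mul_apply (hP1 : ∑ x, P x = 1) {i j : Fin n} (hij : i ≠ j)
    (f g : Z → ℝ) :
    ∑ z : Fin n → Z, (∏ k, P (z k)) * (f (z i) * g (z j)) =
      (∑ x, P x * f x) * ∑ x, P x * g x := by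
  have hfactor := sum_prod_mul_prod_eq_prod_sum P fun k x =>
    (if k = i then f x else 1) * (if k = j then g x else 1)
  simp only [prod_mul_distrib, prod_ite_eq', mem_univ, if_true] at hfactor
  calc ∑ z : Fin n → Z, (∏ k, P (z k)) * (f (z i) * g (z j))
      = ∏ k, (if k = i then ∑ x, P x * f x else 1) *
          (if k = j then ∑ x, P x * g x else 1) := by
        rw [hfactor]
        refine prod_congr rfl fun k _ => ?_
        by_cases hi : k = i <;> by_cases hj : k = j
        · exact absurd (hi.symm.trans hj) hij
        all_goals simp [hi, hj, hij, hij.symm, hP1]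
    _ = (∑ x, P x * f x) * ∑ x, P x * g x := by rw [prod_mul_distrib]; simp

lemma sum_prod_mul_sum_sq (hP1 : ∑ x, P x = 1) {f : Z → ℝ} (hf : ∑ x, P x * f x = 0) :
    ∑ z : Fin n → Z, (∏ k, P (z k)) * (∑ i, f (z i)) ^ 2 = n * ∑ x, P x * f x ^ 2 := by
  calc ∑ z : Fin n → Z, (∏ k, P (z k)) * (∑ i, f (z i)) ^ 2
      = ∑ i, ∑ j, ∑ z : Fin n → Z, (∏ k, P (z k)) * (f (z i) * f (z j)) := by
        simp_rw [sq, sum_mul_sum, mul_sum]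
        rw [sum_comm]
        exact sum_congr rfl fun _ _ => sum_comm
    _ = ∑ i : Fin n, ∑ j : Fin n, if i = j then ∑ x, P x * f x ^ 2 else 0 := by
        refine sum_congr rfl fun i _ => sum_congr rfl fun j _ => ?_
        split_ifs with hij
        · subst hij
          simp_rw [← sq]
          exact sum_prod_mul_apply hP1 i fun x => f x ^ 2
        · rw [sum_prod_mul_apply_mul_apply hP1 hij, hf, zero_mul]
    _ = n * ∑ x, P x * f x ^ 2 := by simp

end ProductWeights

lemma mul_sum_filter_le_sum_mul {α : Type*} (s : Finset α) (p : α → Prop) [DecidablePred p]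
    {w g : α → ℝ} (hw : ∀ x ∈ s, 0 ≤ w x) (hg : ∀ x ∈ s, 0 ≤ g x) {t : ℝ}
    (hpt : ∀ x ∈ s, p x → t ≤ g x) :
    t * ∑ x ∈ s with p x, w x ≤ ∑ x ∈ s, w x * g x := by
  rw [mul_sum]
  calc ∑ x ∈ s with p x, t * w x ≤ ∑ x ∈ s with p x, w x * g x := by
        refine sum_le_sum fun x hx => ?_
        rw [mem_filter] at hx
        nlinarith [hw x hx.1, hpt x hx.1 hx.2]
    _ ≤ ∑ x ∈ s, w x * g x :=
        sum_le_sum_of_subset_of_nonneg (filter_subset _ _) fun x hx _ =>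
          mul_nonneg (hw x hx) (hg x hx)

lemma sum_le_sum_add_sum_abs_sub {α : Type*} [Fintype α] (s : Finset α) (μ ν : α → ℝ) :
    ∑ x ∈ s, μ x ≤ ∑ x ∈ s, ν x + ∑ x, |μ x - ν x| := by
  have : ∑ x ∈ s, (μ x - ν x) ≤ ∑ x, |μ x - ν x| :=
    (sum_le_sum fun x _ => le_abs_self _).trans <|
      sum_le_sum_of_subset_of_nonneg (subset_univ s) fun x _ _ => abs_nonneg _
  rw [sum_sub_distrib] at this
  linarith

section Empirical

variable {Z : Type*} [DecidableEq Z] {P : Z → ℝ} {n : ℕ}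

noncomputable def empiricalDist (z : Fin n → Z) (a : Z) : ℝ :=
  (1 / (n : ℝ)) * ∑ i, if z i = a then 1 else 0

lemma empiricalDist_sub_eq (hn : n ≠ 0) (z : Fin n → Z) (a : Z) :
    empiricalDist z a - P a = (1 / (n : ℝ)) * ∑ i, ((if z i = a then 1 else 0) - P a) := by
  simp only [empiricalDist, sum_sub_distrib, sum_const, card_univ, Fintype.card_fin,
    nsmul_eq_mul]
  field_simp

lemma sum_mul_indicator_sub [Fintype Z] (hP1 : ∑ x, P x = 1) (a : Z) :
    ∑ x, P x * ((if x = a then 1 else 0) - P a) = 0 := by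
  simp [mul_sub, sum_sub_distrib, ← sum_mul, hP1]

lemma sum_mul_indicator_sub_sq [Fintype Z] (hP1 : ∑ x, P x = 1) (a : Z) :
    ∑ x, P x * ((if x = a then 1 else 0) - P a) ^ 2 = P a * (1 - P a) := by
  simp only [sub_sq, ite_pow, one_pow, ne_eq, OfNat.ofNat_ne_zero, not_false_eq_true, zero_pow,
    mul_ite, mul_one, mul_zero, ite_mul, zero_mul, mul_add, mul_sub, sum_add_distrib,
    sum_sub_distrib, sum_ite_eq', mem_univ, ↓reduceIte, ← sum_mul, hP1, one_mul]
  ring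

lemma sum_prod_mul_empiricalDist_sub_sq [Fintype Z] (hP1 : ∑ x, P x = 1) (hn : n ≠ 0)
    (a : Z) :
    ∑ z : Fin n → Z, (∏ k, P (z k)) * (empiricalDist z a - P a) ^ 2 = P a * (1 - P a) / n := by
  simp_rw [empiricalDist_sub_eq hn, mul_pow, mul_left_comm _ ((1 / (n : ℝ)) ^ 2), ← mul_sum,
    sum_prod_mul_sum_sq hP1 (sum_mul_indicator_sub hP1 a), sum_mul_indicator_sub_sq hP1]
  field_simp

lemma sum_prod_mul_sum_abs_empiricalDist_sub_sq_le [Fintype Z] (hP0 : ∀ x, 0 ≤ P x)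
    (hP1 : ∑ x, P x = 1) (hn : n ≠ 0) :
    ∑ z : Fin n → Z, (∏ k, P (z k)) * (∑ a, |empiricalDist z a - P a|) ^ 2 ≤
      Fintype.card Z / n := by
  calc ∑ z : Fin n → Z, (∏ k, P (z k)) * (∑ a, |empiricalDist z a - P a|) ^ 2
      ≤ ∑ z : Fin n → Z, (∏ k, P (z k)) *
          (Fintype.card Z * ∑ a, (empiricalDist z a - P a) ^ 2) := by
        refine sum_le_sum fun z _ => mul_le_mul_of_nonneg_left ?_ (prod_nonneg fun k _ => hP0 _)
        simpa only [sq_abs, card_univ] using sq_sum_le_card_mul_sum_sq (s := univ)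
          (f := fun a => |empiricalDist z a - P a|)
    _ = Fintype.card Z *
          ∑ a, ∑ z : Fin n → Z, (∏ k, P (z k)) * (empiricalDist z a - P a) ^ 2 := by
        simp_rw [mul_sum, mul_left_comm _ (Fintype.card Z : ℝ)]
        exact sum_comm
    _ = Fintype.card Z * ∑ a, P a * (1 - P a) / n := by
        simp_rw [sum_prod_mul_empiricalDist_sub_sq hP1 hn]
    _ ≤ Fintype.card Z * ∑ a, P a / n := by
        gcongr with a
        nlinarith [sq_nonneg (P a)]
    _ = Fintype.card Z / n := by rw [← sum_div, hP1]; ring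

theorem tendsto_sum_prod_filter_lt_sum_abs_empiricalDist_sub [Fintype Z] (hP0 : ∀ x, 0 ≤ P x)
    (hP1 : ∑ x, P x = 1) {ε : ℝ} (hε : 0 < ε) :
    Tendsto (fun n => ∑ z : Fin n → Z with ε < ∑ a, |empiricalDist z a - P a|, ∏ i, P (z i))
      atTop (nhds 0) := by
  have hbound : ∀ n ≠ 0, ∑ z : Fin n → Z with ε < ∑ a, |empiricalDist z a - P a|,
      ∏ i, P (z i) ≤ Fintype.card Z / ε ^ 2 * (1 / n) := by
    intro n hn
    have hmarkov := mul_sum_filter_le_sum_mul univ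
      (fun z : Fin n → Z => ε < ∑ a, |empiricalDist z a - P a|) (w := fun z => ∏ i, P (z i))
      (fun z _ => prod_nonneg fun i _ => hP0 (z i)) (fun z _ => sq_nonneg _)
      (fun z _ hz => pow_le_pow_left₀ hε.le hz.le 2)
    rw [div_mul_eq_mul_div, le_div_iff₀ (by positivity), mul_one_div, mul_comm]
    exact hmarkov.trans (sum_prod_mul_sum_abs_empiricalDist_sub_sq_le hP0 hP1 hn)
  refine squeeze_zero' (Eventually.of_forall fun n => sum_nonneg fun z _ =>
    prod_nonneg fun i _ => hP0 (z i)) ((eventually_ne_atTop 0).mono hbound) ?_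
  simpa using tendsto_one_div_atTop_nhds_zero_nat.const_mul (Fintype.card Z / ε ^ 2)

end Empirical

theorem close_to_iid_implies_typical_general
    {Z : Type*} [Fintype Z] [DecidableEq Z]
    (P : Z → ℝ) (hP0 : ∀ z, 0 ≤ P z) (hP1 : ∑ z, P z = 1)
    (μ : (n : ℕ) → (Fin n → Z) → ℝ)
    (hμ0 : ∀ n z, 0 ≤ μ n z)
    (h : Tendsto (fun n => ∑ z : Fin n → Z, |μ n z - ∏ i, P (z i)|) atTop (nhds 0)) :
    ∀ ε > (0 : ℝ), Tendsto
      (fun n => ∑ z ∈ Finset.univ.filter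
        (fun z : Fin n → Z =>
          ε < ∑ a, |(1 / (n : ℝ)) * (∑ i, if z i = a then (1 : ℝ) else 0) - P a|),
        μ n z)
      atTop (nhds 0) := by
  intro ε hε
  refine squeeze_zero (fun n => sum_nonneg fun z _ => hμ0 n z)
    (fun n => sum_le_sum_add_sum_abs_sub _ (μ n) fun z => ∏ i, P (z i)) ?_
  have := (tendsto_sum_prod_filter_lt_sum_abs_empiricalDist_sub hP0 hP1 hε).add h
  rwa [add_zero] at this

/-- If the variational distance between `μ_n` and the `n`-fold i.i.d.
product `P^{⊗n}` tends to zero, then for every `ε > 0` the `μ_n`-probability that the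
empirical distribution of `z^{1:n}` is more than `ε` away from `P` tends to zero. -/
theorem close_to_iid_implies_typical
    {Z : Type*} [Fintype Z] [DecidableEq Z]
    (P : Z → ℝ) (hP0 : ∀ z, 0 ≤ P z) (hP1 : ∑ z, P z = 1)
    (μ : (n : ℕ) → (Fin n → Z) → ℝ)
    (hμ0 : ∀ n z, 0 ≤ μ n z) (hμ1 : ∀ n, ∑ z, μ n z = 1)
    (h : Tendsto (fun n => ∑ z : Fin n → Z, |μ n z - ∏ i, P (z i)|) atTop (nhds 0)) :
    ∀ ε > (0 : ℝ), Tendsto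
      (fun n => ∑ z ∈ Finset.univ.filter
        (fun z : Fin n → Z =>
          ε < ∑ a, |(1 / (n : ℝ)) * (∑ i, if z i = a then (1 : ℝ) else 0) - P a|),
        μ n z)
      atTop (nhds 0) :=
  close_to_iid_implies_typical_general P hP0 hP1 μ hμ0 h
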